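/- arXiv:1801.07083 — 5 statements merged into one kernel-verified Lean document; each statement's English description precedes it below -/
import Mathlib

section
/- For a random variable X with density f, the DMIM of the scaled variable aX (a ≠ 0) equals ∫ f(x) e^{-f(x)/|a|} dx. -/
open MeasureTheory Real

theorem dmim_stretching (f : ℝ → ℝ) (a : ℝ) (ha : a ≠ 0)
    (hmeas : Measurable f) (hnonneg : ∀ x, 0 ≤ f x)
    (hint : Integrable f) (hprob : ∫ x, f x = 1) :
    ∫ y, (1 / |a|) * f (y / a) * Real.exp (-((1 / |a|) * f (y / a)))
      = ∫ x, f x * Real.exp (-(f x / |a|)) := by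
  have h := MeasureTheory.Measure.integral_comp_div
    (fun x => (1 / |a|) * f x * Real.exp (-((1 / |a|) * f x))) a
  rw [h, smul_eq_mul, ← integral_const_mul]
  congr 1; ext x
  have hA : |a| ≠ 0 := abs_ne_zero.mpr ha
  field_simp
end

section
/- The DMIM of the exponential distribution with rate λ > 0 equals (1/λ)(1 − e^{−λ}). -/
open MeasureTheory Real

theorem dmim_exponential (l : ℝ) (hl : 0 < l) :
    (∫ x : ℝ, (if 0 ≤ x then l * Real.exp (-(l * x)) else 0)
        * Real.exp (-(if 0 ≤ x then l * Real.exp (-(l * x)) else 0)))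
      = (1 / l) * (1 - Real.exp (-l)) := by
  have h1 : (fun x : ℝ => (if 0 ≤ x then l * Real.exp (-(l * x)) else 0)
        * Real.exp (-(if 0 ≤ x then l * Real.exp (-(l * x)) else 0)))
      = Set.indicator (Set.Ici (0:ℝ))
        (fun x => l * Real.exp (-(l * x)) * Real.exp (-(l * Real.exp (-(l * x))))) := by
    funext x
    by_cases h : 0 ≤ x <;> simp [Set.indicator, h]
  rw [h1, integral_indicator measurableSet_Ici, MeasureTheory.integral_Ici_eq_integral_Ioi]
  set F : ℝ → ℝ := fun x => (1 / l) * Real.exp (-(l * Real.exp (-(l * x)))) with hF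
  have hderiv : ∀ x ∈ Set.Ioi (0:ℝ),
      HasDerivAt F (l * Real.exp (-(l * x)) * Real.exp (-(l * Real.exp (-(l * x))))) x := by
    intro x _
    have h2 : HasDerivAt (fun x : ℝ => -(l * x)) (-l) x := by
      simpa using ((hasDerivAt_id x).const_mul l).fun_neg
    have h3 : HasDerivAt (fun x : ℝ => Real.exp (-(l * x)))
        (Real.exp (-(l * x)) * (-l)) x := h2.exp
    have h4 : HasDerivAt (fun x : ℝ => -(l * Real.exp (-(l * x))))
        (-(l * (Real.exp (-(l * x)) * (-l)))) x := (h3.const_mul l).neg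
    have h5 : HasDerivAt F (1 / l * (Real.exp (-(l * Real.exp (-(l * x)))) * -(l * (Real.exp (-(l * x)) * -l)))) x :=
      (h4.exp).const_mul (1 / l)
    convert h5 using 1
    field_simp
  have hint : IntegrableOn
      (fun x => l * Real.exp (-(l * x)) * Real.exp (-(l * Real.exp (-(l * x)))))
      (Set.Ioi (0:ℝ)) := by
    have hg : IntegrableOn (fun x : ℝ => l * Real.exp (-l * x)) (Set.Ioi (0:ℝ)) :=
      (exp_neg_integrableOn_Ioi 0 hl).const_mul l
    refine Integrable.mono' hg ?_ ?_
    · exact (Continuous.mul (continuous_const.mul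
        ((continuous_const.mul continuous_id).neg.rexp))
        ((continuous_const.mul ((continuous_const.mul continuous_id).neg.rexp)).neg.rexp)
        ).aestronglyMeasurable
    · filter_upwards with x
      have h1 : Real.exp (-(l * Real.exp (-(l * x)))) ≤ 1 := by
        rw [Real.exp_le_one_iff]
        have : 0 ≤ l * Real.exp (-(l * x)) := by positivity
        linarith
      have h0 : (0:ℝ) ≤ l * Real.exp (-(l * x)) := by positivity
      rw [Real.norm_eq_abs, abs_of_nonneg (by positivity)]
      calc l * Real.exp (-(l * x)) * Real.exp (-(l * Real.exp (-(l * x))))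
          ≤ l * Real.exp (-(l * x)) * 1 := by
            apply mul_le_mul_of_nonneg_left h1 h0
        _ = l * Real.exp (-l * x) := by ring_nf
  have htop : Filter.Tendsto F Filter.atTop (nhds (1 / l)) := by
    have h2 : Filter.Tendsto (fun x : ℝ => -(l * Real.exp (-(l * x)))) Filter.atTop
        (nhds 0) := by
      have : Filter.Tendsto (fun x : ℝ => -(l * x)) Filter.atTop Filter.atBot := by
        have := (Filter.tendsto_id.const_mul_atTop hl : Filter.Tendsto (fun x : ℝ => l * x) Filter.atTop Filter.atTop)
        exact Filter.tendsto_neg_atBot_iff.mpr this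
      simpa using ((Real.tendsto_exp_atBot.comp this).const_mul l).neg
    have h3 := (Real.continuous_exp.continuousAt.tendsto.comp h2).const_mul (1 / l)
    simp only [Function.comp, Real.exp_zero, mul_one] at h3
    simpa [hF] using h3
  have hcont : ContinuousWithinAt F (Set.Ici 0) 0 :=
    (continuous_const.mul (Real.continuous_exp.comp
      ((continuous_const.mul ((continuous_const.mul continuous_id).neg.rexp)).neg))).continuousWithinAt
  have key := integral_Ioi_of_hasDerivAt_of_tendsto hcont hderiv hint htop
  rw [key]
  simp only [hF]
  rw [mul_zero, neg_zero, Real.exp_zero, mul_one]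
  ring
end

section
/- The DMIM of the Laplace distribution with scale parameter λ > 0 and location θ equals (2/λ)(1 − e^{−λ/2}). -/
open MeasureTheory Real

theorem dmim_laplace (l θ : ℝ) (hl : 0 < l) :
    (∫ x : ℝ, (l / 2) * Real.exp (-(l * |x - θ|))
        * Real.exp (-((l / 2) * Real.exp (-(l * |x - θ|)))))
      = (2 / l) * (1 - Real.exp (-(l / 2))) := by
  have hl' : l ≠ 0 := hl.ne'
  -- shift by θ
  have h1 : (∫ x : ℝ, (l / 2) * Real.exp (-(l * |x - θ|))
        * Real.exp (-((l / 2) * Real.exp (-(l * |x - θ|)))))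
      = ∫ x : ℝ, (l / 2) * Real.exp (-(l * |x|))
        * Real.exp (-((l / 2) * Real.exp (-(l * |x|)))) := by
    exact integral_sub_right_eq_self (fun x : ℝ => (l / 2) * Real.exp (-(l * |x|))
        * Real.exp (-((l / 2) * Real.exp (-(l * |x|))))) θ
  rw [h1, integral_comp_abs (f := fun x : ℝ => (l / 2) * Real.exp (-(l * x))
        * Real.exp (-((l / 2) * Real.exp (-(l * x)))))]
  set g : ℝ → ℝ := fun x => (1 / l) * Real.exp (-((l / 2) * Real.exp (-(l * x)))) with hg
  have hderiv : ∀ x : ℝ, HasDerivAt g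
      ((l / 2) * Real.exp (-(l * x)) * Real.exp (-((l / 2) * Real.exp (-(l * x))))) x := by
    intro x
    have h2 : HasDerivAt (fun x : ℝ => -((l / 2) * Real.exp (-(l * x))))
        ((l / 2) * (Real.exp (-(l * x)) * l)) x := by
      have := ((hasDerivAt_id x).const_mul l).neg.exp.const_mul (l / 2)
      exact this.neg.congr_deriv (by simp [id])
    have h3 := (h2.exp).const_mul (1 / l)
    exact h3.congr_deriv (by field_simp)
  have htend : Filter.Tendsto g Filter.atTop (nhds (1 / l)) := by
    have h4 : Filter.Tendsto (fun x : ℝ => -((l / 2) * Real.exp (-(l * x))))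
        Filter.atTop (nhds 0) := by
      rw [show (0 : ℝ) = -((l / 2) * 0) by ring]
      exact ((Real.tendsto_exp_atBot.comp
        (Filter.tendsto_neg_atBot_iff.mpr (Filter.tendsto_id.const_mul_atTop hl))).const_mul
        (l / 2)).neg
    have h5 := ((Real.continuous_exp.tendsto 0).comp h4).const_mul (1 / l)
    simp only [Real.exp_zero, mul_one] at h5
    exact h5
  have key := integral_Ioi_of_hasDerivAt_of_nonneg
    (g := g)
    (g' := fun x => (l / 2) * Real.exp (-(l * x)) * Real.exp (-((l / 2) * Real.exp (-(l * x)))))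
    (a := 0) (hderiv 0).continuousAt.continuousWithinAt
    (fun x _ => hderiv x)
    (fun x _ => by positivity) htend
  rw [key]
  simp only [hg]
  rw [mul_zero, neg_zero, Real.exp_zero, mul_one]
  field_simp
end

section
/- If ∫ f(x)^{n+1} dx ≤ ε for every n ≥ 2, then |l(X) − (1 − ∫ f(x)² dx)| ≤ (e − 2)·ε, where ∫ f(x)² dx = e^{−h₂(X)} and h₂ is the Rényi entropy of order 2. -/
open MeasureTheory Real

set_option maxHeartbeats 1000000 in
theorem dmim_renyi_dual (f : ℝ → ℝ) (ε : ℝ) (hε : 0 < ε)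
    (hmeas : Measurable f) (hnonneg : ∀ x, 0 ≤ f x)
    (hint : Integrable f) (hprob : ∫ x, f x = 1)
    (hexp : ∫ x, f x * Real.exp (-(f x))
      = 1 + ∑' n : ℕ, ((-1 : ℝ) ^ (n + 1) / (Nat.factorial (n + 1)))
          * ∫ x, (f x) ^ (n + 2))
    (hbound : ∀ n : ℕ, 2 ≤ n → ∫ x, (f x) ^ (n + 1) ≤ ε) :
    |(∫ x, f x * Real.exp (-(f x))) - (1 - ∫ x, (f x) ^ 2)|
      ≤ (Real.exp 1 - 2) * ε := by
  set I : ℕ → ℝ := fun n => ∫ x, (f x) ^ (n + 2) with hI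
  set g : ℕ → ℝ := fun n => ((-1 : ℝ) ^ (n + 1) / (Nat.factorial (n + 1))) * I n with hg
  have hInn : ∀ n, 0 ≤ I n := fun n =>
    integral_nonneg (fun x => pow_nonneg (hnonneg x) _)
  have hIle : ∀ n, 1 ≤ n → I n ≤ ε := by
    intro n hn
    have := hbound (n + 1) (by omega)
    simpa [hI, show n + 1 + 1 = n + 2 by ring] using this
  -- summability of 1/n!
  have hfac : Summable (fun n : ℕ => (1 : ℝ) / (Nat.factorial n)) := by
    simpa using Real.summable_pow_div_factorial 1
  have hfac1 : Summable (fun n : ℕ => (1 : ℝ) / (Nat.factorial (n + 1))) :=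
    (summable_nat_add_iff 1).2 hfac
  have hfac2 : Summable (fun n : ℕ => (1 : ℝ) / (Nat.factorial (n + 2))) :=
    (summable_nat_add_iff 2).2 hfac
  -- bound on |g n|
  set M : ℝ := max ε (I 0) with hM
  have hgnorm : ∀ n, ‖g n‖ ≤ M * (1 / (Nat.factorial (n + 1))) := by
    intro n
    have hIn : I n ≤ M := by
      rcases Nat.eq_zero_or_pos n with h | h
      · rw [h]; exact le_max_right _ _
      · exact (hIle n h).trans (le_max_left _ _)
    have h1 : ‖g n‖ = I n / (Nat.factorial (n + 1)) := by
      rw [hg]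
      rw [Real.norm_eq_abs, abs_mul, abs_div, abs_pow, abs_neg, abs_one, one_pow,
        abs_of_nonneg (hInn n)]
      simp [Nat.abs_cast]
      ring
    rw [h1]
    rw [div_le_iff₀ (by positivity)]
    calc I n ≤ M := hIn
    _ = M * (1 / (Nat.factorial (n+1))) * (Nat.factorial (n+1)) := by
        field_simp
  have hgsum : Summable g :=
    Summable.of_norm_bounded (hfac1.mul_left M) hgnorm
  -- value of tail sum of 1/n!
  have hesum : Real.exp 1 = ∑' n : ℕ, (1 : ℝ) / (Nat.factorial n) := by
    rw [Real.exp_eq_exp_ℝ, NormedSpace.exp_eq_tsum_div]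
    simp
  have htail : ∑' n : ℕ, (1 : ℝ) / (Nat.factorial (n + 2)) = Real.exp 1 - 2 := by
    have h0 : ∑' n : ℕ, (1 : ℝ) / (Nat.factorial n)
        = 1 + ∑' n : ℕ, (1 : ℝ) / (Nat.factorial (n + 1)) := by
      rw [Summable.tsum_eq_zero_add hfac]; simp
    have h1 : ∑' n : ℕ, (1 : ℝ) / (Nat.factorial (n + 1))
        = 1 + ∑' n : ℕ, (1 : ℝ) / (Nat.factorial (n + 2)) := by
      rw [Summable.tsum_eq_zero_add hfac1]; simp
    rw [hesum, h0, h1]; ring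
  -- main rewriting
  rw [hexp]
  have hsplit : ∑' n : ℕ, ((-1 : ℝ) ^ (n + 1) / (Nat.factorial (n + 1)))
      * ∫ x, (f x) ^ (n + 2) = g 0 + ∑' n, g (n + 1) := Summable.tsum_eq_zero_add hgsum
  have hg0 : g 0 = -(∫ x, (f x) ^ 2) := by
    simp [hg, hI]
  rw [hsplit, hg0]
  have hsimp : 1 + (-(∫ x, (f x) ^ 2) + ∑' n, g (n + 1)) - (1 - ∫ x, (f x) ^ 2)
      = ∑' n, g (n + 1) := by ring
  rw [hsimp]
  have hgsum1 : Summable (fun n => g (n + 1)) := (summable_nat_add_iff 1).2 hgsum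
  rw [← Real.norm_eq_abs]
  calc ‖∑' n, g (n + 1)‖ ≤ ∑' n : ℕ, ε * (1 / (Nat.factorial (n + 2))) := by
        refine (norm_tsum_le_tsum_norm ?_).trans ?_
        · exact hgsum1.norm
        refine Summable.tsum_le_tsum (fun n => ?_) hgsum1.norm (hfac2.mul_left ε)
        have h1 : ‖g (n + 1)‖ = I (n + 1) / (Nat.factorial (n + 2)) := by
          rw [hg]
          rw [Real.norm_eq_abs, abs_mul, abs_div, abs_pow, abs_neg, abs_one, one_pow,
            abs_of_nonneg (hInn (n + 1))]
          simp [Nat.abs_cast]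
          ring
        rw [h1, div_le_iff₀ (by positivity)]
        calc I (n + 1) ≤ ε := hIle (n + 1) (by omega)
        _ = ε * (1 / (Nat.factorial (n + 2))) * (Nat.factorial (n + 2)) := by
            field_simp
  _ = ε * (Real.exp 1 - 2) := by rw [tsum_mul_left, htail]
  _ = (Real.exp 1 - 2) * ε := by ring
end

section
/- If d = √(2πσ² ln(19/(9β))) · ln(1/(1−ε)) with 0 < ε < 1, 0 < β ≤ 1, σ > 0, and n ≥ 1/(4πσ² ln²(1−ε)), then 2 e^{−2nd²}/(1 − e^{−8nd²}) ≤ β. -/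
/-!
With `t = exp (-(2 n d²))`, the lower bound on `n` gives `2 n d² ≥ log (19 / (9 β))`, i.e.
`t ≤ 9 β / 19`. Then `t⁴ ≤ (9 / 19)⁴ < 1 / 19`, so `2 t ≤ (18 / 19) β ≤ β (1 - t⁴)`.
-/

open Real

lemma two_mul_div_one_sub_pow_four_le {β t : ℝ} (hβ : β ≤ 1) (ht₀ : 0 ≤ t)
    (ht : t ≤ 9 * β / 19) : 2 * t / (1 - t ^ 4) ≤ β := by
  have ht₁ : t ≤ 9 / 19 := by linarith
  have ht₄ : t ^ 4 ≤ 1 / 19 :=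
    (pow_le_pow_left₀ ht₀ ht₁ 4).trans (by norm_num)
  rw [div_le_iff₀ (by linarith)]
  nlinarith

lemma exp_neg_le_inv_of_log_le {a x : ℝ} (ha : 0 < a) (h : log a ≤ x) :
    exp (-x) ≤ a⁻¹ := by
  calc exp (-x) ≤ exp (-log a) := exp_le_exp.mpr (neg_le_neg h)
    _ = a⁻¹ := by rw [exp_neg, exp_log ha]

theorem ks_tail_bound (σ ε β d n : ℝ) (hσ : 0 < σ) (hε0 : 0 < ε) (hε1 : ε < 1)
    (hβ0 : 0 < β) (hβ1 : β ≤ 1)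
    (hd : d = Real.sqrt (2 * Real.pi * σ ^ 2 * Real.log (19 / (9 * β)))
            * Real.log (1 / (1 - ε)))
    (hn : n ≥ 1 / (4 * Real.pi * σ ^ 2 * (Real.log (1 - ε)) ^ 2)) :
    2 * Real.exp (-(2 * n * d ^ 2)) / (1 - Real.exp (-(8 * n * d ^ 2))) ≤ β := by
  set L := log (19 / (9 * β))
  have hL : 0 ≤ L := log_nonneg (by rw [le_div_iff₀ (by positivity)]; linarith)
  have hlog : 0 < log (1 - ε) ^ 2 :=
    pow_two_pos_of_ne_zero (log_neg (by linarith) (by linarith)).ne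
  have hd2 : d ^ 2 = 2 * π * σ ^ 2 * L * log (1 - ε) ^ 2 := by
    rw [hd, mul_pow, sq_sqrt (by positivity), one_div, log_inv, neg_sq]
  have hnden : 1 ≤ n * (4 * π * σ ^ 2 * log (1 - ε) ^ 2) := by
    rwa [ge_iff_le, div_le_iff₀ (by positivity)] at hn
  have hkey : L ≤ 2 * n * d ^ 2 := by
    rw [hd2]
    nlinarith [mul_le_mul_of_nonneg_left hnden hL]
  have ht : exp (-(2 * n * d ^ 2)) ≤ 9 * β / 19 := by
    simpa [L] using exp_neg_le_inv_of_log_le (by positivity) hkey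
  have h8 : exp (-(8 * n * d ^ 2)) = exp (-(2 * n * d ^ 2)) ^ 4 := by
    rw [← exp_nat_mul]; ring_nf
  rw [h8]
  exact two_mul_div_one_sub_pow_four_le hβ1 (exp_pos _).le ht
end
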